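/- Let X⁽ᵛ⁾ be an n×p_v real matrix for v = 1, …, m, let X = [X⁽¹⁾, …, X⁽ᵐ⁾] be the n×p column-concatenated matrix with p = p₁ + ⋯ + p_m, and let X = U D Vᵀ be a singular value decomposition, where U is an n×n orthogonal matrix, V is a p×p orthogonal matrix, and D is an n×p matrix that is zero off the main diagonal with nonnegative diagonal entries σ₁ ≥ σ₂ ≥ ⋯ (singular values in decreasing order). For k ≤ min(n,p), let Uₖ be the n×k matrix of the first k columns of U and V_{1:k}⁽ᵛ⁾ the p_v×k block of V_{1:k} (the p×k matrix of the first k columns of V) consisting of the rows indexed p₁+⋯+p_{v−1}+1 through p₁+⋯+p_v. Let K⁽ᵛ⁾ = X⁽ᵛ⁾(X⁽ᵛ⁾)ᵀ, let Q be a k×k orthogonal matrix, and set H = UₖQ. Then tr(K⁽ᵛ⁾ − HᵀK⁽ᵛ⁾H) = tr(X⁽ᵛ⁾(X⁽ᵛ⁾)ᵀ) − ( tr((V_{1:k}⁽ᵛ⁾)ᵀ (X⁽ᵛ⁾)ᵀ X⁽ᵛ⁾ V_{1:k}⁽ᵛ⁾) + ∑_{w≠v} tr((V_{1:k}⁽ᵛ⁾)ᵀ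 (X⁽ᵛ⁾)ᵀ X⁽ʷ⁾ V_{1:k}⁽ʷ⁾) ). -/

import Mathlib

/-!
Orthonormality of the columns of `U` and `V` turns `X = U D Vᵀ` into `Uₖᵀ X = Σₖ V_{1:k}ᵀ` and
`X V_{1:k} = Uₖ Σₖ`. Restricting the first identity to the columns of view `v`, and splitting the
second into a sum over the views, gives `Uₖᵀ X⁽ᵛ⁾ = Σₖ (V_{1:k}⁽ᵛ⁾)ᵀ` and
`∑_w X⁽ʷ⁾ V_{1:k}⁽ʷ⁾ = Uₖ Σₖ`. The rotation `Q` drops out of the trace, so the explained variance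
`tr(Hᵀ K⁽ᵛ⁾ H)` and the sum of the covariance traces both equal
`tr((V_{1:k}⁽ᵛ⁾)ᵀ (X⁽ᵛ⁾)ᵀ Uₖ Σₖ)`.
-/

open Matrix

namespace Matrix

section RectangularDiagonal

variable {R : Type*} [NonUnitalNonAssocSemiring R] {N M k : ℕ} {σ : ℕ → R}
  {D : Matrix (Fin N) (Fin M) R}

lemma mul_submatrix_castLE_of_apply_eq_ite {ι : Type*}
    (hD : ∀ i j, D i j = if (i : ℕ) = (j : ℕ) then σ i else 0) (hkN : k ≤ N) (hkM : k ≤ M)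
    (A : Matrix ι (Fin N) R) :
    (A * D).submatrix id (Fin.castLE hkM) =
      A.submatrix id (Fin.castLE hkN) * diagonal (fun a : Fin k => σ a) := by
  ext i a
  rw [submatrix_apply, mul_apply, Finset.sum_eq_single (Fin.castLE hkN a)]
  · simp [hD]
  · intro r _ hr
    rw [hD, if_neg, mul_zero]
    exact fun h => hr (Fin.ext h)
  · simp

lemma submatrix_castLE_mul_of_apply_eq_ite {ι : Type*}
    (hD : ∀ i j, D i j = if (i : ℕ) = (j : ℕ) then σ i else 0) (hkN : k ≤ N) (hkM : k ≤ M)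
    (B : Matrix (Fin M) ι R) :
    (D * B).submatrix (Fin.castLE hkN) id =
      diagonal (fun a : Fin k => σ a) * B.submatrix (Fin.castLE hkM) id := by
  ext a j
  rw [submatrix_apply, mul_apply, Finset.sum_eq_single (Fin.castLE hkM a)]
  · simp [hD]
  · intro c _ hc
    rw [hD, if_neg, zero_mul]
    exact fun h => hc (Fin.ext h.symm)
  · simp

end RectangularDiagonal

lemma mul_eq_sum_submatrix_sigma {R ι ν β : Type*} {κ : β → Type*} [NonUnitalNonAssocSemiring R]
    [Fintype β] [∀ b, Fintype (κ b)] (A : Matrix ι (Σ b, κ b) R) (B : Matrix (Σ b, κ b) ν R) :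
    A * B = ∑ b, A.submatrix id (Sigma.mk b) * B.submatrix (Sigma.mk b) id := by
  ext i j
  simp only [mul_apply, sum_apply, submatrix_apply, id, Fintype.sum_sigma]

lemma trace_transpose_mul_mul_of_mul_transpose_eq_one {R n : Type*} [CommSemiring R] [Fintype n]
    [DecidableEq n] {Q : Matrix n n R} (hQ : Q * Qᵀ = 1) (B : Matrix n n R) :
    (Qᵀ * B * Q).trace = B.trace := by
  rw [trace_mul_cycle, hQ, one_mul]

section TruncatedSVD

variable {R ι κ : Type*} [CommSemiring R] {N M k : ℕ} {σ : ℕ → R}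
  {X : Matrix ι κ R} {U : Matrix ι (Fin N) R} {D : Matrix (Fin N) (Fin M) R}
  {V : Matrix κ (Fin M) R}

lemma transpose_submatrix_castLE_mul_of_svd [Fintype ι] (hU : Uᵀ * U = 1)
    (hD : ∀ i j, D i j = if (i : ℕ) = (j : ℕ) then σ i else 0) (hsvd : X = U * D * Vᵀ)
    (hkN : k ≤ N) (hkM : k ≤ M) :
    (U.submatrix id (Fin.castLE hkN))ᵀ * X =
      diagonal (fun a : Fin k => σ a) * (V.submatrix id (Fin.castLE hkM))ᵀ := by
  have hUX : Uᵀ * X = D * Vᵀ := by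
    rw [hsvd, Matrix.mul_assoc, ← Matrix.mul_assoc Uᵀ, hU, Matrix.one_mul]
  rw [transpose_submatrix, transpose_submatrix, ← submatrix_id_id X,
    ← submatrix_mul _ _ _ _ _ Function.bijective_id, hUX,
    submatrix_castLE_mul_of_apply_eq_ite hD hkN hkM]

lemma mul_submatrix_castLE_of_svd [Fintype κ] (hV : Vᵀ * V = 1)
    (hD : ∀ i j, D i j = if (i : ℕ) = (j : ℕ) then σ i else 0) (hsvd : X = U * D * Vᵀ)
    (hkN : k ≤ N) (hkM : k ≤ M) :
    X * V.submatrix id (Fin.castLE hkM) =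
      U.submatrix id (Fin.castLE hkN) * diagonal (fun a : Fin k => σ a) := by
  have hXV : X * V = U * D := by rw [hsvd, Matrix.mul_assoc, hV, Matrix.mul_one]
  rw [← submatrix_id_id X, ← submatrix_mul _ _ _ _ _ Function.bijective_id, hXV,
    mul_submatrix_castLE_of_apply_eq_ite hD hkN hkM]

end TruncatedSVD

end Matrix

theorem unexplained_variability_decomposition_general {n m k : ℕ} (p : Fin m → ℕ)
    (hk1 : k ≤ n) (hk2 : k ≤ ∑ v, p v)
    (Xv : ∀ v : Fin m, Matrix (Fin n) (Fin (p v)) ℝ)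
    (X : Matrix (Fin n) ((v : Fin m) × Fin (p v)) ℝ)
    (hX : ∀ i q, X i q = Xv q.1 i q.2)
    (U : Matrix (Fin n) (Fin n) ℝ)
    (V : Matrix ((v : Fin m) × Fin (p v)) (Fin (∑ v, p v)) ℝ)
    (D : Matrix (Fin n) (Fin (∑ v, p v)) ℝ)
    (σ : ℕ → ℝ)
    (hU : Uᵀ * U = 1)
    (hV : Vᵀ * V = 1)
    (hD : ∀ i j, D i j = if (i : ℕ) = (j : ℕ) then σ (i : ℕ) else 0)
    (hsvd : X = U * D * Vᵀ)
    (Q : Matrix (Fin k) (Fin k) ℝ) (hQ' : Q * Qᵀ = 1)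
    (H : Matrix (Fin n) (Fin k) ℝ)
    (hH : H = U.submatrix id (Fin.castLE hk1) * Q)
    (Vb : ∀ v : Fin m, Matrix (Fin (p v)) (Fin k) ℝ)
    (hVb : ∀ v, Vb v =
      V.submatrix (fun r : Fin (p v) => (⟨v, r⟩ : (w : Fin m) × Fin (p w)))
        (Fin.castLE hk2)) :
    ∀ v : Fin m,
      (Xv v * (Xv v)ᵀ).trace - (Hᵀ * (Xv v * (Xv v)ᵀ) * H).trace =
        (Xv v * (Xv v)ᵀ).trace -
          (((Vb v)ᵀ * (Xv v)ᵀ * Xv v * Vb v).trace +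
            ∑ w ∈ Finset.univ.erase v, ((Vb v)ᵀ * (Xv v)ᵀ * Xv w * Vb w).trace) := by
  intro v
  set Uk := U.submatrix id (Fin.castLE hk1)
  set S := diagonal (fun a : Fin k => σ a)
  have hXv : ∀ w, Xv w = X.submatrix id (Sigma.mk w) := fun w => by ext i r; simp [hX]
  have hUkXv : Ukᵀ * Xv v = S * (Vb v)ᵀ := by
    rw [hXv, ← submatrix_id_id Ukᵀ, ← submatrix_mul _ _ _ _ _ Function.bijective_id,
      transpose_submatrix_castLE_mul_of_svd hU hD hsvd hk1 hk2, hVb,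
      transpose_submatrix, transpose_submatrix, submatrix_mul _ _ _ _ _ Function.bijective_id]
    rfl
  have hblocks : ∑ w, Xv w * Vb w = Uk * S := by
    rw [← mul_submatrix_castLE_of_svd hV hD hsvd hk1 hk2, mul_eq_sum_submatrix_sigma]
    simp only [hXv, hVb]
    rfl
  have hcross : ((Vb v)ᵀ * (Xv v)ᵀ * Xv v * Vb v).trace +
      ∑ w ∈ Finset.univ.erase v, ((Vb v)ᵀ * (Xv v)ᵀ * Xv w * Vb w).trace =
      ((Vb v)ᵀ * (Xv v)ᵀ * Uk * S).trace := by
    rw [Finset.add_sum_erase _ (fun w => ((Vb v)ᵀ * (Xv v)ᵀ * Xv w * Vb w).trace)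
      (Finset.mem_univ v)]
    simp only [Matrix.mul_assoc, ← trace_sum, ← Matrix.mul_sum, hblocks]
  have hexplained : (Hᵀ * (Xv v * (Xv v)ᵀ) * H).trace = ((Vb v)ᵀ * (Xv v)ᵀ * Uk * S).trace := by
    calc (Hᵀ * (Xv v * (Xv v)ᵀ) * H).trace
        = (Qᵀ * ((Ukᵀ * Xv v) * ((Xv v)ᵀ * Uk)) * Q).trace := by
          simp only [hH, transpose_mul, Matrix.mul_assoc]
      _ = (S * ((Vb v)ᵀ * (Xv v)ᵀ * Uk)).trace := by
          rw [trace_transpose_mul_mul_of_mul_transpose_eq_one hQ', hUkXv]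
          simp only [Matrix.mul_assoc]
      _ = ((Vb v)ᵀ * (Xv v)ᵀ * Uk * S).trace := trace_mul_comm _ _
  rw [hexplained, hcross]

/-- Proposition S3 of the paper: with `K⁽ᵛ⁾ = X⁽ᵛ⁾ (X⁽ᵛ⁾)ᵀ` and `H = Uₖ * Q`
for an orthogonal `Q`, the within-cluster variance satisfies
`tr(K⁽ᵛ⁾) − tr(Hᵀ K⁽ᵛ⁾ H) = tr(X⁽ᵛ⁾ (X⁽ᵛ⁾)ᵀ) −
  (tr((V_{1:k}⁽ᵛ⁾)ᵀ (X⁽ᵛ⁾)ᵀ X⁽ᵛ⁾ V_{1:k}⁽ᵛ⁾)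
   + ∑_{w ≠ v} tr((V_{1:k}⁽ᵛ⁾)ᵀ (X⁽ᵛ⁾)ᵀ X⁽ʷ⁾ V_{1:k}⁽ʷ⁾))`. -/
theorem unexplained_variability_decomposition {n m k : ℕ} (p : Fin m → ℕ)
    (hk1 : k ≤ n) (hk2 : k ≤ ∑ v, p v)
    (Xv : ∀ v : Fin m, Matrix (Fin n) (Fin (p v)) ℝ)
    (X : Matrix (Fin n) ((v : Fin m) × Fin (p v)) ℝ)
    (hX : ∀ i q, X i q = Xv q.1 i q.2)
    (U : Matrix (Fin n) (Fin n) ℝ)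
    (V : Matrix ((v : Fin m) × Fin (p v)) (Fin (∑ v, p v)) ℝ)
    (D : Matrix (Fin n) (Fin (∑ v, p v)) ℝ)
    (σ : ℕ → ℝ)
    (hU : Uᵀ * U = 1) (hU' : U * Uᵀ = 1)
    (hV : Vᵀ * V = 1) (hV' : V * Vᵀ = 1)
    (hD : ∀ i j, D i j = if (i : ℕ) = (j : ℕ) then σ (i : ℕ) else 0)
    (hσ : Antitone σ) (hσ0 : ∀ i, 0 ≤ σ i)
    (hsvd : X = U * D * Vᵀ)
    (Q : Matrix (Fin k) (Fin k) ℝ) (hQ : Qᵀ * Q = 1) (hQ' : Q * Qᵀ = 1)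
    (H : Matrix (Fin n) (Fin k) ℝ)
    (hH : H = U.submatrix id (Fin.castLE hk1) * Q)
    (Vb : ∀ v : Fin m, Matrix (Fin (p v)) (Fin k) ℝ)
    (hVb : ∀ v, Vb v =
      V.submatrix (fun r : Fin (p v) => (⟨v, r⟩ : (w : Fin m) × Fin (p w)))
        (Fin.castLE hk2)) :
    ∀ v : Fin m,
      (Xv v * (Xv v)ᵀ).trace - (Hᵀ * (Xv v * (Xv v)ᵀ) * H).trace =
        (Xv v * (Xv v)ᵀ).trace -
          (((Vb v)ᵀ * (Xv v)ᵀ * Xv v * Vb v).trace +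
            ∑ w ∈ Finset.univ.erase v, ((Vb v)ᵀ * (Xv v)ᵀ * Xv w * Vb w).trace) :=
  unexplained_variability_decomposition_general p hk1 hk2 Xv X hX U V D σ hU hV hD hsvd Q hQ' H hH
    Vb hVb
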